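/- Let (a_i)_{i≥1} be a sequence of real numbers bounded above by A, and let 0 < c2 < c ≤ A. Suppose there exists N such that (1/n)·∑_{i=1}^n a_i ≥ c for all n ≥ N. Then there exist δ > 0 (depending only on A, c, c2) and infinitely many integers m ('Pliss times') such that (1/k)·∑_{i=m-k+1}^{m} a_i ≥ c2 for every 1 ≤ k ≤ m; moreover the set H of such m has lower density at least δ, i.e., #(H ∩ [1,n]) ≥ δ·n for all sufficiently large n. -/

import Mathlib

/-!
Put `S n = ∑_{i ≤ n} a i - c₂ n`. A time `m` is a Pliss time exactly when `S j ≤ S m` for all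
`j < m`, i.e. when `m` is a weak record of `S`. Since `S` increases by at most `A - c₂` per step,
the running maximum of `S` can only grow by `A - c₂` at a record, so up to time `n` there are at
least `S n / (A - c₂) ≥ (c - c₂) n / (A - c₂)` records.
-/

open Finset

theorem Finset.sum_Icc_add_one_eq_sub {M : Type*} [AddCommGroup M] (a : ℕ → M) {j m : ℕ}
    (hjm : j ≤ m) : ∑ i ∈ Icc (j + 1) m, a i = ∑ i ∈ Icc 1 m, a i - ∑ i ∈ Icc 1 j, a i := by
  have hIcc_one : ∀ n : ℕ, Icc 1 n = Ioc 0 n := Icc_add_one_left_eq_Ioc 0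
  rw [Icc_add_one_left_eq_Ioc, hIcc_one, hIcc_one]
  exact eq_sub_of_add_eq' (sum_Ioc_consecutive a j.zero_le hjm)

def IsRecord (f : ℕ → ℝ) (m : ℕ) : Prop := ∀ j < m, f j ≤ f m

noncomputable instance (f : ℕ → ℝ) : DecidablePred (IsRecord f) := Classical.decPred _

noncomputable def records (f : ℕ → ℝ) (n : ℕ) : Finset ℕ := {m ∈ Icc 1 n | IsRecord f m}

section records

variable {f : ℕ → ℝ}

theorem coe_records (n : ℕ) :
    (records f n : Set ℕ) = {m | 1 ≤ m ∧ IsRecord f m} ∩ Set.Icc 1 n := by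
  ext m
  simp only [records, coe_filter, mem_Icc, Set.mem_inter_iff, Set.mem_ofPred_eq, Set.mem_Icc]
  tauto

theorem records_succ_of_isRecord {n : ℕ} (h : IsRecord f (n + 1)) :
    records f (n + 1) = insert (n + 1) (records f n) := by
  rw [records, ← insert_Icc_right_eq_Icc_add_one (by omega), filter_insert, if_pos h, records]

theorem card_records_le_succ (n : ℕ) : #(records f n) ≤ #(records f (n + 1)) :=
  card_le_card (filter_subset_filter _ (Icc_subset_Icc_right n.le_succ))

theorem le_mul_card_records {L : ℝ} (hL : 0 ≤ L) (h0 : f 0 ≤ 0)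
    (hstep : ∀ n, f (n + 1) ≤ f n + L) (n : ℕ) : ∀ j ≤ n, f j ≤ L * #(records f n) := by
  induction n with
  | zero =>
    intro j hj
    obtain rfl : j = 0 := by omega
    simpa [records] using h0
  | succ n ih =>
    have hmono : L * #(records f n) ≤ L * #(records f (n + 1)) :=
      mul_le_mul_of_nonneg_left (by exact_mod_cast card_records_le_succ n) hL
    intro j hj
    rcases hj.lt_or_eq with hj | rfl
    · exact (ih j (Nat.lt_succ_iff.mp hj)).trans hmono
    by_cases hrec : IsRecord f (n + 1)
    · have hnew : n + 1 ∉ records f n := by simp [records]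
      rw [records_succ_of_isRecord hrec, card_insert_of_notMem hnew]
      push_cast
      linarith [hstep n, ih n le_rfl]
    · obtain ⟨j, hj, hlt⟩ : ∃ j < n + 1, f (n + 1) < f j := by
        simpa [IsRecord] using hrec
      linarith [ih j (by omega)]

theorem le_mul_ncard_records {L : ℝ} (hL : 0 ≤ L) (h0 : f 0 ≤ 0)
    (hstep : ∀ n, f (n + 1) ≤ f n + L) (n : ℕ) :
    f n ≤ L * ({m | 1 ≤ m ∧ IsRecord f m} ∩ Set.Icc 1 n).ncard := by
  rw [← coe_records, Set.ncard_coe_finset]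
  exact le_mul_card_records hL h0 hstep n n le_rfl

end records

theorem Set.infinite_of_le_ncard_inter_Icc {H : Set ℕ} {δ : ℝ} (hδ : 0 < δ) {N : ℕ}
    (h : ∀ n, N ≤ n → δ * n ≤ (H ∩ Set.Icc 1 n).ncard) : H.Infinite := by
  intro hfin
  obtain ⟨n, hn⟩ := exists_nat_gt (max (N : ℝ) (H.ncard / δ))
  obtain ⟨hNn, hHn⟩ := max_lt_iff.mp hn
  rw [div_lt_iff₀ hδ] at hHn
  have hbound : ((H ∩ Set.Icc 1 n).ncard : ℝ) ≤ H.ncard := by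
    exact_mod_cast Set.ncard_le_ncard Set.inter_subset_left hfin
  linarith [h n (by exact_mod_cast hNn.le)]

noncomputable def excess (a : ℕ → ℝ) (c : ℝ) (n : ℕ) : ℝ := ∑ i ∈ Icc 1 n, a i - c * n

def IsPlissTime (a : ℕ → ℝ) (c : ℝ) (m : ℕ) : Prop :=
  ∀ k : ℕ, 1 ≤ k → k ≤ m → c ≤ (1 / (k : ℝ)) * ∑ i ∈ Icc (m - k + 1) m, a i

section excess

variable {a : ℕ → ℝ} {c : ℝ}

theorem excess_zero : excess a c 0 = 0 := by simp [excess]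

theorem excess_succ_le {A : ℝ} (ha : ∀ i, 1 ≤ i → a i ≤ A) (n : ℕ) :
    excess a c (n + 1) ≤ excess a c n + (A - c) := by
  simp only [excess, sum_Icc_succ_top (by omega : 1 ≤ n + 1)]
  push_cast
  linarith [ha (n + 1) (by omega)]

theorem le_average_iff_excess_le {k m : ℕ} (hk : 1 ≤ k) (hkm : k ≤ m) :
    c ≤ (1 / (k : ℝ)) * ∑ i ∈ Icc (m - k + 1) m, a i ↔ excess a c (m - k) ≤ excess a c m := by
  rw [sum_Icc_add_one_eq_sub a (Nat.sub_le m k), one_div, inv_mul_eq_div,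
    le_div_iff₀ (Nat.cast_pos.mpr hk), excess, excess, Nat.cast_sub hkm]
  constructor <;> intro h <;> linarith

theorem isPlissTime_iff_isRecord {m : ℕ} : IsPlissTime a c m ↔ IsRecord (excess a c) m := by
  constructor
  · intro h j hj
    have := (le_average_iff_excess_le (by omega) (Nat.sub_le m j)).mp (h (m - j) (by omega) (Nat.sub_le m j))
    rwa [Nat.sub_sub_self hj.le] at this
  · intro h k hk hkm
    exact (le_average_iff_excess_le hk hkm).mpr (h _ (by omega))

theorem mul_sub_le_excess {b : ℝ} {n : ℕ} (h : b ≤ (1 / (n : ℝ)) * ∑ i ∈ Icc 1 n, a i) :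
    (b - c) * n ≤ excess a c n := by
  rcases n.eq_zero_or_pos with rfl | hn
  · simp [excess]
  · rw [one_div, inv_mul_eq_div, le_div_iff₀ (Nat.cast_pos.mpr hn)] at h
    rw [excess]
    linarith

end excess

theorem pliss_lemma_general (A c c2 : ℝ) (hcc : c2 < c) (hcA : c ≤ A) :
    ∃ δ : ℝ, 0 < δ ∧
      ∀ a : ℕ → ℝ, (∀ i, 1 ≤ i → a i ≤ A) →
        (∃ N : ℕ, ∀ n : ℕ, N ≤ n → c ≤ (1 / (n : ℝ)) * ∑ i ∈ Finset.Icc 1 n, a i) →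
        (Set.Infinite {m : ℕ | 1 ≤ m ∧ ∀ k : ℕ, 1 ≤ k → k ≤ m →
            c2 ≤ (1 / (k : ℝ)) * ∑ i ∈ Finset.Icc (m - k + 1) m, a i}) ∧
        (∃ N' : ℕ, ∀ n : ℕ, N' ≤ n →
          δ * (n : ℝ) ≤
            (({m : ℕ | 1 ≤ m ∧ ∀ k : ℕ, 1 ≤ k → k ≤ m →
              c2 ≤ (1 / (k : ℝ)) * ∑ i ∈ Finset.Icc (m - k + 1) m, a i} ∩
              Set.Icc 1 n).ncard : ℝ)) := by
  have hL : 0 < A - c2 := by linarith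
  have hδ : 0 < (c - c2) / (A - c2) := div_pos (by linarith) hL
  refine ⟨(c - c2) / (A - c2), hδ, fun a ha ⟨N, hN⟩ => ?_⟩
  have hdensity : ∀ n, N ≤ n → (c - c2) / (A - c2) * n ≤
      ({m | 1 ≤ m ∧ IsPlissTime a c2 m} ∩ Set.Icc 1 n).ncard := by
    intro n hn
    simp_rw [isPlissTime_iff_isRecord]
    rw [div_mul_eq_mul_div, div_le_iff₀ hL, mul_comm _ (A - c2)]
    exact (mul_sub_le_excess (hN n hn)).trans
      (le_mul_ncard_records hL.le excess_zero.le (excess_succ_le ha) n)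
  exact ⟨Set.infinite_of_le_ncard_inter_Icc hδ hdensity, N, hdensity⟩

/-- Pliss Lemma: if the Cesàro averages of a sequence bounded above by `A`
eventually exceed `c`, then for any `c₂ ∈ (0, c)` the set of Pliss times
(times `m` at which all backward averages exceed `c₂`) is infinite and has
lower density at least some `δ > 0` depending only on `A, c, c₂`. -/
theorem pliss_lemma (A c c2 : ℝ) (hc2 : 0 < c2) (hcc : c2 < c) (hcA : c ≤ A) :
    ∃ δ : ℝ, 0 < δ ∧
      ∀ a : ℕ → ℝ, (∀ i, 1 ≤ i → a i ≤ A) →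
        (∃ N : ℕ, ∀ n : ℕ, N ≤ n → c ≤ (1 / (n : ℝ)) * ∑ i ∈ Finset.Icc 1 n, a i) →
        (Set.Infinite {m : ℕ | 1 ≤ m ∧ ∀ k : ℕ, 1 ≤ k → k ≤ m →
            c2 ≤ (1 / (k : ℝ)) * ∑ i ∈ Finset.Icc (m - k + 1) m, a i}) ∧
        (∃ N' : ℕ, ∀ n : ℕ, N' ≤ n →
          δ * (n : ℝ) ≤
            (({m : ℕ | 1 ≤ m ∧ ∀ k : ℕ, 1 ≤ k → k ≤ m →
              c2 ≤ (1 / (k : ℝ)) * ∑ i ∈ Finset.Icc (m - k + 1) m, a i} ∩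
              Set.Icc 1 n).ncard : ℝ)) :=
  pliss_lemma_general A c c2 hcc hcA
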